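/- arXiv:1508.06523 — 2 statements merged into one kernel-verified Lean document; each statement's English description precedes it below -/
import Mathlib

section
/- Let $w(x) = ax + b$ with $a \neq 0$, and let $\mathcal{I} = \{x : ax+b > 0\}$. Define the one-step transition density $p_1(x|y,\sigma) = k_\sigma(x;y) w(x)/w(y)$ for $x, y \in \mathcal{I}$ (using that $\int k_\sigma(z;y) w(z)\,dz = w(y)$). Then for all $n \geq 1$ and all $x, y \in \mathcal{I}$, assuming all intermediate integrations are restricted to paths where the formula $p_1$ applies, the $n$-step density obtained by iterated convolution over $\mathbb{R}$, $p_n(x|y,\sigma) = \int_{\mathbb{R}^{n-1}} \prod_{k=1}^n p_1(x_k | x_{k-1}, \sigma)\, dx_1 \cdots dx_{n-1}$ (with $x_0 = y$, $x_n = x$), equals $p_1(x | y, \sqrt{n}\sigma)$, i.e., $p_n(x|y,\sigma) = k_{\sqrt{n}\sigma}(x;y)\, w(x)/w(y)$. -/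
open MeasureTheory Real

/-- Gaussian density with mean `m` and standard deviation `σ`, evaluated at `y`. -/
noncomputable def gauss (σ m y : ℝ) : ℝ :=
  (Real.sqrt (2 * Real.pi) * σ)⁻¹ * Real.exp (-(y - m) ^ 2 / (2 * σ ^ 2))

/-- One-step transition density with linear weighting function `w x = a x + b`,
using `∫ k σ (z;y) w(z) dz = w y` so that the normalization constant is `w y`.
Here `p1lin a b σ y x` is the density of a step from `y` to `x`. -/
noncomputable def p1lin (a b σ y x : ℝ) : ℝ :=
  gauss σ y x * (a * x + b) / (a * y + b)

/-- `pnlin a b σ n y x` is the `(n+1)`-step density obtained by the iterated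
(Chapman–Kolmogorov) integration over the intermediate locations. -/
noncomputable def pnlin (a b σ : ℝ) : ℕ → ℝ → ℝ → ℝ
  | 0 => fun y x => p1lin a b σ y x
  | (m + 1) => fun y x => ∫ z : ℝ, pnlin a b σ m y z * p1lin a b σ z x

/-! Completing the square in the intermediate point shows that the Gaussian kernels form a
convolution semigroup, `∫ k_τ(z; y) k_σ(x; z) dz = k_√(τ² + σ²)(x; y)`. In the Chapman–Kolmogorov
integrand the weights telescope, `(w z / w y) * (w x / w z) = w x / w y`, except on the null set
`w z = 0`, so each step of the induction just adds `σ²` to the variance. -/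

lemma neg_sq_div_add_neg_sq_div_eq {σ τ : ℝ} (hσ : σ ≠ 0) (hτ : τ ≠ 0) (x y z : ℝ) :
    -(z - y) ^ 2 / (2 * τ ^ 2) + -(x - z) ^ 2 / (2 * σ ^ 2) =
      -(x - y) ^ 2 / (2 * (τ ^ 2 + σ ^ 2)) +
        -((τ ^ 2 + σ ^ 2) / (2 * τ ^ 2 * σ ^ 2)) *
          (z - (σ ^ 2 * y + τ ^ 2 * x) / (τ ^ 2 + σ ^ 2)) ^ 2 := by
  have hd : τ ^ 2 + σ ^ 2 ≠ 0 := by positivity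
  field_simp
  ring

lemma integral_exp_neg_mul_sub_sq (β c : ℝ) :
    ∫ z : ℝ, exp (-β * (z - c) ^ 2) = √(π / β) := by
  rw [← integral_gaussian β]
  exact integral_sub_right_eq_self (fun u => exp (-β * u ^ 2)) c

theorem integral_gauss_mul_gauss {σ τ : ℝ} (hσ : 0 < σ) (hτ : 0 < τ) (x y : ℝ) :
    ∫ z : ℝ, gauss τ y z * gauss σ z x = gauss √(τ ^ 2 + σ ^ 2) y x := by
  set d := τ ^ 2 + σ ^ 2
  set β := d / (2 * τ ^ 2 * σ ^ 2)
  have hd : 0 < d := by positivity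
  have hfactor : ∀ z, gauss τ y z * gauss σ z x =
      (√(2 * π) * τ)⁻¹ * (√(2 * π) * σ)⁻¹ * exp (-(x - y) ^ 2 / (2 * d)) *
        exp (-β * (z - (σ ^ 2 * y + τ ^ 2 * x) / d) ^ 2) := by
    intro z
    rw [gauss, gauss, mul_mul_mul_comm, ← exp_add,
      neg_sq_div_add_neg_sq_div_eq hσ.ne' hτ.ne', exp_add, ← mul_assoc]
  have hsqrt : √(π / β) = √(2 * π) * τ * σ / √d := by
    have : π / β = 2 * π * τ ^ 2 * σ ^ 2 / d := by simp only [β]; field_simp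
    rw [this, sqrt_div (by positivity), sqrt_mul (by positivity), sqrt_mul (by positivity),
      sqrt_sq hτ.le, sqrt_sq hσ.le, mul_assoc]
  simp_rw [hfactor]
  rw [integral_const_mul, integral_exp_neg_mul_sub_sq, hsqrt, gauss, sq_sqrt hd.le]
  field_simp

lemma volume_setOf_mul_add_eq_zero {a b y : ℝ} (hy : a * y + b ≠ 0) :
    volume {z : ℝ | a * z + b = 0} = 0 := by
  refine Set.Subsingleton.measure_zero (fun z₁ h₁ z₂ h₂ => ?_) volume
  rcases eq_or_ne a 0 with rfl | ha
  · simp_all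
  · exact mul_left_cancel₀ ha (by linarith [h₁.out, h₂.out])

lemma pnlin_succ (a b σ : ℝ) (m : ℕ) (y x : ℝ) :
    pnlin a b σ (m + 1) y x = ∫ z : ℝ, pnlin a b σ m y z * p1lin a b σ z x :=
  rfl

theorem pnlin_eq_gauss {a b σ y : ℝ} (hσ : 0 < σ) (hy : a * y + b ≠ 0) (m : ℕ) (x : ℝ) :
    pnlin a b σ m y x = gauss (√(m + 1) * σ) y x * (a * x + b) / (a * y + b) := by
  induction m generalizing x with
  | zero => simp [pnlin, p1lin]
  | succ m ih =>
    set τ := √(m + 1) * σ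
    have hτ : 0 < τ := by positivity
    have htelescope : (fun z => pnlin a b σ m y z * p1lin a b σ z x) =ᵐ[volume]
        fun z => gauss τ y z * gauss σ z x * ((a * x + b) / (a * y + b)) := by
      filter_upwards [measure_eq_zero_iff_ae_notMem.1 (volume_setOf_mul_add_eq_zero hy)]
        with z (hz : a * z + b ≠ 0)
      rw [ih, p1lin]
      field_simp
    have hvar : √(τ ^ 2 + σ ^ 2) = √((m + 1 : ℕ) + 1) * σ := by
      rw [mul_pow, sq_sqrt (by positivity), ← add_one_mul, sqrt_mul (by positivity),
        sqrt_sq hσ.le, Nat.cast_succ]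
    rw [pnlin_succ, integral_congr_ae htelescope, integral_mul_const,
      integral_gauss_mul_gauss hσ hτ, hvar, mul_div_assoc]

theorem linear_weight_robust_general (a b σ : ℝ) (hσ : 0 < σ) (n : ℕ) (hn : 1 ≤ n)
    (x y : ℝ) (hy : 0 < a * y + b) :
    pnlin a b σ (n - 1) y x =
      gauss (Real.sqrt n * σ) y x * (a * x + b) / (a * y + b) := by
  obtain ⟨m, rfl⟩ := Nat.exists_eq_add_of_le' hn
  simpa using pnlin_eq_gauss hσ hy.ne' m x

theorem linear_weight_robust (a b σ : ℝ) (ha : a ≠ 0) (hσ : 0 < σ) (n : ℕ) (hn : 1 ≤ n)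
    (x y : ℝ) (hx : 0 < a * x + b) (hy : 0 < a * y + b) :
    pnlin a b σ (n - 1) y x =
      gauss (Real.sqrt n * σ) y x * (a * x + b) / (a * y + b) :=
  linear_weight_robust_general a b σ hσ n hn x y hy
end

section
/- Let $w : \mathbb{R} \to \mathbb{R}$ be continuous, positive, and such that $\int k_\sigma(z;y) w(z)\,dz$ is finite for all $y$ and $\sigma$. Define $p_1(x|y,\sigma) = k_\sigma(x;y) w(x) / \int_{\mathbb{R}} k_\sigma(z;y) w(z)\,dz$ and the two-step density $p_2(x|y,\sigma) = \int_{\mathbb{R}} p_1(x|z,\sigma)\, p_1(z|y,\sigma)\, dz$. Then $p_2(x|y,\sigma) = p_1(x|y,\sqrt{2}\sigma) \cdot v(x,y)$, where $v(x,y) = \frac{\int k_{\sqrt{2}\sigma}(u;y) w(u)\,du}{\int k_\sigma(u;y) w(u)\,du} \cdot \int_{\mathbb{R}} k_{\sigma/\sqrt{2}}\big(z; \tfrac{1}{2}(x+y)\big) \frac{w(z)}{\int k_\sigma(u;z) w(u)\,du}\, dz$. -/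
/-!
The heart of the argument is the Gaussian product identity
`k_σ(x; z) k_σ(z; y) = k_{√2σ}(x; y) k_{σ/√2}(z; (x + y)/2)`, obtained by completing the square
in `z`. Substituting it into the integrand of `p₂` and pulling the `z`-independent factors out
of the integral leaves `v(x, y)` up to the normalizer `∫ k_{√2σ}(u; y) w(u) du`, which is
positive because `w` is.
-/

open MeasureTheory Real

lemma gauss_pos {σ : ℝ} (hσ : 0 < σ) (m y : ℝ) : 0 < gauss σ m y := by
  have : 0 < Real.sqrt (2 * Real.pi) := Real.sqrt_pos.2 (by positivity)
  unfold gauss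
  positivity

lemma gauss_mul_gauss {σ : ℝ} (hσ : σ ≠ 0) (x y z : ℝ) :
    gauss σ z x * gauss σ y z =
      gauss (Real.sqrt 2 * σ) y x * gauss (σ / Real.sqrt 2) ((x + y) / 2) z := by
  have : 0 < Real.sqrt (2 * Real.pi) := Real.sqrt_pos.2 (by positivity)
  have hvar_mul : (Real.sqrt 2 * σ) ^ 2 = 2 * σ ^ 2 := by
    rw [mul_pow, Real.sq_sqrt zero_le_two]
  have hvar_div : (σ / Real.sqrt 2) ^ 2 = σ ^ 2 / 2 := by
    rw [div_pow, Real.sq_sqrt zero_le_two]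
  unfold gauss
  rw [mul_mul_mul_comm, ← Real.exp_add, mul_mul_mul_comm, ← Real.exp_add, hvar_mul, hvar_div]
  congr 1
  · field_simp
  · congr 1
    field_simp
    ring

lemma integral_pos_of_forall_pos {α : Type*} [MeasurableSpace α] {μ : Measure α} [NeZero μ]
    {f : α → ℝ} (hf : Integrable f μ) (hpos : ∀ x, 0 < f x) : 0 < ∫ x, f x ∂μ := by
  have hsupport : Function.support f = Set.univ :=
    Set.eq_univ_of_forall fun x => (hpos x).ne'
  rw [integral_pos_iff_support_of_nonneg (fun x => (hpos x).le) hf, hsupport]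
  exact Measure.measure_univ_pos.2 (NeZero.ne μ)

theorem two_step_decomposition_general (w : ℝ → ℝ)
    (hw_pos : ∀ x, 0 < w x)
    (hw_int : ∀ σ : ℝ, 0 < σ → ∀ y : ℝ, Integrable (fun z => gauss σ y z * w z))
    (σ : ℝ) (hσ : 0 < σ) (x y : ℝ) :
    (∫ z : ℝ, (gauss σ z x * w x / ∫ u : ℝ, gauss σ z u * w u) *
        (gauss σ y z * w z / ∫ u : ℝ, gauss σ y u * w u)) =
      (gauss (Real.sqrt 2 * σ) y x * w x / ∫ u : ℝ, gauss (Real.sqrt 2 * σ) y u * w u) *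
        ((∫ u : ℝ, gauss (Real.sqrt 2 * σ) y u * w u) / (∫ u : ℝ, gauss σ y u * w u) *
          ∫ z : ℝ, gauss (σ / Real.sqrt 2) ((x + y) / 2) z *
            (w z / ∫ u : ℝ, gauss σ z u * w u)) := by
  have hσ' : 0 < Real.sqrt 2 * σ := mul_pos (Real.sqrt_pos.2 two_pos) hσ
  have hnormalizer : (∫ u : ℝ, gauss (Real.sqrt 2 * σ) y u * w u) ≠ 0 :=
    (integral_pos_of_forall_pos (hw_int _ hσ' y)
      fun u => mul_pos (gauss_pos hσ' y u) (hw_pos u)).ne'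
  calc (∫ z : ℝ, (gauss σ z x * w x / ∫ u : ℝ, gauss σ z u * w u) *
          (gauss σ y z * w z / ∫ u : ℝ, gauss σ y u * w u))
      = ∫ z : ℝ, (gauss (Real.sqrt 2 * σ) y x * w x / ∫ u : ℝ, gauss σ y u * w u) *
          (gauss (σ / Real.sqrt 2) ((x + y) / 2) z * (w z / ∫ u : ℝ, gauss σ z u * w u)) := by
        refine integral_congr_ae (Filter.Eventually.of_forall fun z => ?_)
        linear_combination (w x * w z * (∫ u : ℝ, gauss σ z u * w u)⁻¹ *
          (∫ u : ℝ, gauss σ y u * w u)⁻¹) * gauss_mul_gauss hσ.ne' x y z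
    _ = _ := by
        rw [integral_const_mul]
        field_simp

theorem two_step_decomposition (w : ℝ → ℝ) (hw_cont : Continuous w)
    (hw_pos : ∀ x, 0 < w x)
    (hw_int : ∀ σ : ℝ, 0 < σ → ∀ y : ℝ, Integrable (fun z => gauss σ y z * w z))
    (σ : ℝ) (hσ : 0 < σ) (x y : ℝ) :
    (∫ z : ℝ, (gauss σ z x * w x / ∫ u : ℝ, gauss σ z u * w u) *
        (gauss σ y z * w z / ∫ u : ℝ, gauss σ y u * w u)) =
      (gauss (Real.sqrt 2 * σ) y x * w x / ∫ u : ℝ, gauss (Real.sqrt 2 * σ) y u * w u) *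
        ((∫ u : ℝ, gauss (Real.sqrt 2 * σ) y u * w u) / (∫ u : ℝ, gauss σ y u * w u) *
          ∫ z : ℝ, gauss (σ / Real.sqrt 2) ((x + y) / 2) z *
            (w z / ∫ u : ℝ, gauss σ z u * w u)) :=
  two_step_decomposition_general w hw_pos hw_int σ hσ x y
end
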